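/- arXiv:1508.07566 — 4 statements merged into one kernel-verified Lean document; each statement's English description precedes it below -/
import Mathlib

section
/- Let ρ be a Fox pairing in a cocommutative involutive Hopf algebra A with antipode s and counit ε. Then for all x, y ∈ A (in Sweedler notation): ρ(s(x), s(y)) = s(x') · ρ(x'', y') · s(y''). -/
/-!
Applying `ρ(-, z)` to the antipode identity `s(x') x'' = ε(x) 1` and expanding with the Fox rule
in the first variable gives `ρ(s x, z) = -s(x') ρ(x'', z)`, because `ρ(1, z) = 0` and
`ε(x'') x' = x`. Symmetrically `ρ(w, s y) = -ρ(w, y') s(y'')`, and substituting the second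
formula into the first gives the claim.
-/

open scoped TensorProduct

/-- `Coalgebra.Repr` as it was in Mathlib of December 2024 (index type a field). -/
structure OldCoalgebraRepr (R : Type*) {A : Type*}
    [CommSemiring R] [AddCommMonoid A] [Module R A] [CoalgebraStruct R A] (a : A) where
  {ι : Type*}
  (index : Finset ι)
  (left : ι → A)
  (right : ι → A)
  (eq : ∑ i ∈ index, left i ⊗ₜ[R] right i = CoalgebraStruct.comul a)

open Coalgebra HopfAlgebra

def OldCoalgebraRepr.toRepr {R A : Type*} [CommSemiring R] [AddCommMonoid A] [Module R A]
    [CoalgebraStruct R A] {a : A} (r : OldCoalgebraRepr R a) : Coalgebra.Repr R a r.ι where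
  index := r.index
  left := r.left
  right := r.right
  eq := r.eq

lemma Coalgebra.sum_smul_counit {R A ι : Type*} [CommSemiring R] [AddCommMonoid A] [Module R A]
    [Coalgebra R A] {a : A} (𝓡 : Repr R a ι) :
    ∑ i ∈ 𝓡.index, counit (R := R) (𝓡.right i) • 𝓡.left i = a := by
  simpa only [map_sum, _root_.TensorProduct.rid_tmul, one_smul]
    using congrArg (_root_.TensorProduct.rid R A) (sum_tmul_counit_eq (R := R) 𝓡)

section FoxPairing

variable {K A : Type*} [CommRing K] [Ring A]

lemma fox_apply_one [Bialgebra K A] {ρ : A →ₗ[K] A →ₗ[K] A}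
    (hFox₁ : ∀ x y z : A, ρ x (y * z) = ρ x y * z + counit (R := K) y • ρ x z) (x : A) :
    ρ x 1 = 0 := by
  simpa using hFox₁ x 1 1

lemma fox_one_apply [Bialgebra K A] {ρ : A →ₗ[K] A →ₗ[K] A}
    (hFox₂ : ∀ x y z : A, ρ (x * y) z = counit (R := K) y • ρ x z + x * ρ y z) (z : A) :
    ρ 1 z = 0 := by
  simpa using hFox₂ 1 1 z

variable [HopfAlgebra K A] {ρ : A →ₗ[K] A →ₗ[K] A}

lemma fox_antipode_apply
    (hFox₂ : ∀ x y z : A, ρ (x * y) z = counit (R := K) y • ρ x z + x * ρ y z)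
    {ι : Type*} {x : A} (𝓡 : Repr K x ι) (z : A) :
    ρ (antipode K x) z = -∑ i ∈ 𝓡.index, antipode K (𝓡.left i) * ρ (𝓡.right i) z := by
  have hx : ρ (antipode K x) z =
      ∑ i ∈ 𝓡.index, counit (R := K) (𝓡.right i) • ρ (antipode K (𝓡.left i)) z := by
    conv_lhs => rw [← sum_smul_counit 𝓡]
    simp only [map_sum, map_smul, LinearMap.sum_apply, LinearMap.smul_apply]
  refine eq_neg_of_add_eq_zero_left ?_
  calc ρ (antipode K x) z + ∑ i ∈ 𝓡.index, antipode K (𝓡.left i) * ρ (𝓡.right i) z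
      = ∑ i ∈ 𝓡.index, ρ (antipode K (𝓡.left i) * 𝓡.right i) z := by
        simp only [hx, hFox₂, Finset.sum_add_distrib]
    _ = ρ (counit (R := K) x • 1) z := by
        simp only [← sum_antipode_mul_eq_smul 𝓡, map_sum, LinearMap.sum_apply]
    _ = 0 := by simp [fox_one_apply hFox₂]

lemma fox_apply_antipode
    (hFox₁ : ∀ x y z : A, ρ x (y * z) = ρ x y * z + counit (R := K) y • ρ x z)
    (x : A) {ι : Type*} {y : A} (𝓡 : Repr K y ι) :
    ρ x (antipode K y) = -∑ i ∈ 𝓡.index, ρ x (𝓡.left i) * antipode K (𝓡.right i) := by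
  have hy : ρ x (antipode K y) =
      ∑ i ∈ 𝓡.index, counit (R := K) (𝓡.left i) • ρ x (antipode K (𝓡.right i)) := by
    conv_lhs => rw [← sum_counit_smul 𝓡]
    simp only [map_sum, map_smul]
  refine eq_neg_of_add_eq_zero_left ?_
  calc ρ x (antipode K y) + ∑ i ∈ 𝓡.index, ρ x (𝓡.left i) * antipode K (𝓡.right i)
      = ∑ i ∈ 𝓡.index, ρ x (𝓡.left i * antipode K (𝓡.right i)) := by
        simp only [hy, hFox₁, ← Finset.sum_add_distrib, add_comm]
    _ = ρ x (counit (R := K) y • 1) := by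
        simp only [← sum_mul_antipode_eq_smul 𝓡, map_sum]
    _ = 0 := by simp [fox_apply_one hFox₁]

end FoxPairing

theorem fox_pairing_antipode_antipode_general
    {K A : Type*} [CommRing K] [Ring A] [HopfAlgebra K A]
    (ρ : A →ₗ[K] A →ₗ[K] A)
    (hFox₁ : ∀ x y z : A,
      ρ x (y * z) = ρ x y * z + Coalgebra.counit (R := K) y • ρ x z)
    (hFox₂ : ∀ x y z : A,
      ρ (x * y) z = Coalgebra.counit (R := K) y • ρ x z + x * ρ y z)
    (x y : A) (rx : OldCoalgebraRepr K x) (ry : OldCoalgebraRepr K y) :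
    ρ (HopfAlgebra.antipode (R := K) x) (HopfAlgebra.antipode (R := K) y) =
      ∑ i ∈ rx.index, ∑ j ∈ ry.index,
        HopfAlgebra.antipode (R := K) (rx.left i) *
          ρ (rx.right i) (ry.left j) *
            HopfAlgebra.antipode (R := K) (ry.right j) := by
  rw [fox_antipode_apply hFox₂ rx.toRepr, ← Finset.sum_neg_distrib]
  refine Finset.sum_congr rfl fun i _ => ?_
  rw [fox_apply_antipode hFox₁ _ ry.toRepr, mul_neg, neg_neg, Finset.mul_sum]
  simp only [OldCoalgebraRepr.toRepr, mul_assoc]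

/-- Let `ρ` be a Fox pairing in a cocommutative involutive Hopf
algebra `A` with antipode `s` and counit `ε`.  Then for all `x, y ∈ A` (in
Sweedler notation): `ρ(s(x), s(y)) = s(x') · ρ(x'', y') · s(y'')`.  Sweedler
notation is encoded by arbitrary representations `rx`, `ry` of `Δ(x)`, `Δ(y)`
as finite sums of pure tensors. -/
theorem fox_pairing_antipode_antipode
    {K A : Type*} [CommRing K] [Ring A] [HopfAlgebra K A]
    (hcocomm : ∀ a : A,
      TensorProduct.comm K A A (Coalgebra.comul a) = Coalgebra.comul (R := K) a)
    (hinv : ∀ a : A,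
      HopfAlgebra.antipode (R := K) (HopfAlgebra.antipode (R := K) a) = a)
    (ρ : A →ₗ[K] A →ₗ[K] A)
    (hFox₁ : ∀ x y z : A,
      ρ x (y * z) = ρ x y * z + Coalgebra.counit (R := K) y • ρ x z)
    (hFox₂ : ∀ x y z : A,
      ρ (x * y) z = Coalgebra.counit (R := K) y • ρ x z + x * ρ y z)
    (x y : A) (rx : OldCoalgebraRepr K x) (ry : OldCoalgebraRepr K y) :
    ρ (HopfAlgebra.antipode (R := K) x) (HopfAlgebra.antipode (R := K) y) =
      ∑ i ∈ rx.index, ∑ j ∈ ry.index,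
        HopfAlgebra.antipode (R := K) (rx.left i) *
          ρ (rx.right i) (ry.left j) *
            HopfAlgebra.antipode (R := K) (ry.right j) :=
  fox_pairing_antipode_antipode_general ρ hFox₁ hFox₂ x y rx ry
end

section
/- Given an element a of a Hopf algebra A, the map ρ_a(x,y) = (x - ε(x)1)·a·(y - ε(y)1) is a Fox pairing. Moreover, if s(a) = -a, where s is the antipode, then ρ_a is antisymmetric (its transpose equals its negative). -/
/-!
`ρ_a(x, y) = π(x) a π(y)` with `π(x) = x - ε(x) 1` the projection onto the augmentation ideal.
The Fox rules are the two twisted Leibniz rules `π(yz) = π(y) z + ε(y) π(z)` and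
`π(xy) = ε(y) π(x) + x π(y)`, which follow from multiplicativity of `ε`. Since the antipode is
an anti-homomorphism fixing `1` and preserving `ε`, it commutes with `π` and reverses the
product `π(y) a π(x)`; with `s² = id` and `s(a) = -a` this turns the transpose into `-ρ_a`.
-/

open Coalgebra HopfAlgebra

section Bialgebra

variable (K : Type*) {A : Type*} [CommSemiring K] [Ring A] [Bialgebra K A]

def kerCounitProj : A →ₗ[K] A := LinearMap.id - Algebra.linearMap K A ∘ₗ counit

variable {K}

@[simp]
theorem kerCounitProj_apply (x : A) : kerCounitProj K x = x - counit (R := K) x • (1 : A) := by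
  simp [kerCounitProj, Algebra.algebraMap_eq_smul_one]

theorem kerCounitProj_mul (x y : A) :
    kerCounitProj K (x * y) = kerCounitProj K x * y + counit (R := K) x • kerCounitProj K y := by
  simp only [kerCounitProj_apply, Bialgebra.counit_mul, sub_mul, smul_sub, smul_smul, smul_mul_assoc,
    one_mul]
  abel

theorem kerCounitProj_mul' (x y : A) :
    kerCounitProj K (x * y) = counit (R := K) y • kerCounitProj K x + x * kerCounitProj K y := by
  simp only [kerCounitProj_apply, Bialgebra.counit_mul, mul_sub, smul_sub, smul_smul, mul_smul_comm,
    mul_one, mul_comm (counit (R := K) y)]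
  abel

variable (K)

def foxPairingOfElem (a : A) : A →ₗ[K] A →ₗ[K] A :=
  ((LinearMap.mul K A).comp ((LinearMap.mulRight K a).comp (kerCounitProj K))).compl₂
    (kerCounitProj K)

variable {K}

theorem foxPairingOfElem_apply (a x y : A) :
    foxPairingOfElem K a x y = kerCounitProj K x * a * kerCounitProj K y := rfl

theorem foxPairingOfElem_mul_right (a x y z : A) :
    foxPairingOfElem K a x (y * z) =
      foxPairingOfElem K a x y * z + counit (R := K) y • foxPairingOfElem K a x z := by
  simp only [foxPairingOfElem_apply, kerCounitProj_mul, mul_add, mul_assoc, mul_smul_comm]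

theorem foxPairingOfElem_mul_left (a x y z : A) :
    foxPairingOfElem K a (x * y) z =
      counit (R := K) y • foxPairingOfElem K a x z + x * foxPairingOfElem K a y z := by
  simp only [foxPairingOfElem_apply, kerCounitProj_mul', add_mul, mul_assoc, smul_mul_assoc]

end Bialgebra

section HopfAlgebra

variable {K A : Type*} [CommSemiring K] [Ring A] [HopfAlgebra K A]

theorem antipode_kerCounitProj (x : A) :
    antipode K (kerCounitProj K x) = kerCounitProj K (antipode K x) := by
  simp

theorem antipode_foxPairingOfElem (a x y : A) :
    antipode K (foxPairingOfElem K a y x) =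
      foxPairingOfElem K (antipode K a) (antipode K x) (antipode K y) := by
  simp only [foxPairingOfElem_apply, antipode_mul_antidistrib, antipode_kerCounitProj, mul_assoc]

end HopfAlgebra

/-- Given an element `a` of a Hopf algebra `A`, the map
`ρ_a(x,y) = (x - ε(x)1)·a·(y - ε(y)1)` is a Fox pairing (bilinear and
satisfying the two Fox–Leibniz rules).  Moreover, if `s(a) = -a`, where `s` is
the (involutive) antipode, then `ρ_a` is antisymmetric: its transpose
`(x,y) ↦ s(ρ_a(s(y),s(x)))` equals `-ρ_a`. -/
theorem fox_pairing_of_element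
    {K A : Type*} [CommRing K] [Ring A] [HopfAlgebra K A]
    (hinv : ∀ b : A,
      HopfAlgebra.antipode (R := K) (HopfAlgebra.antipode (R := K) b) = b)
    (a : A) (ρ : A → A → A)
    (hρ : ∀ x y : A,
      ρ x y = (x - Coalgebra.counit (R := K) x • (1 : A)) * a *
        (y - Coalgebra.counit (R := K) y • (1 : A))) :
    (∀ x x' y : A, ρ (x + x') y = ρ x y + ρ x' y) ∧
    (∀ (k : K) (x y : A), ρ (k • x) y = k • ρ x y) ∧
    (∀ x y y' : A, ρ x (y + y') = ρ x y + ρ x y') ∧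
    (∀ (k : K) (x y : A), ρ x (k • y) = k • ρ x y) ∧
    (∀ x y z : A, ρ x (y * z) = ρ x y * z + Coalgebra.counit (R := K) y • ρ x z) ∧
    (∀ x y z : A, ρ (x * y) z = Coalgebra.counit (R := K) y • ρ x z + x * ρ y z) ∧
    (HopfAlgebra.antipode (R := K) a = -a →
      ∀ x y : A,
        HopfAlgebra.antipode (R := K)
            (ρ (HopfAlgebra.antipode (R := K) y) (HopfAlgebra.antipode (R := K) x)) =
          - ρ x y) := by
  obtain rfl : ρ = fun x y => foxPairingOfElem K a x y := by
    ext x y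
    rw [hρ, foxPairingOfElem_apply, kerCounitProj_apply, kerCounitProj_apply]
  refine ⟨fun x x' y => LinearMap.map_add₂ _ x x' y, fun k x y => LinearMap.map_smul₂ _ k x y,
    fun x y y' => map_add _ _ _, fun k x y => map_smul _ _ _,
    foxPairingOfElem_mul_right a, foxPairingOfElem_mul_left a, fun ha x y => ?_⟩
  beta_reduce
  rw [antipode_foxPairingOfElem, hinv, hinv, ha, foxPairingOfElem_apply, foxPairingOfElem_apply,
    mul_neg, neg_mul]
end

section
/- A bilinear form • : B × B → K on an algebra B equipped with an algebra homomorphism ε : B → K is a biderivation (i.e. a derivation in each variable) if and only if both the left annihilator and the right annihilator of • contain the submodule K·1_B + I², where I = Ker ε. -/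
/-- A bilinear form `β : B × B → K` on an algebra `B` equipped
with an algebra homomorphism `ε : B → K` is a biderivation (i.e. a derivation
in each variable) if and only if both the left annihilator and the right
annihilator of `β` contain the submodule `K·1_B + I²`, where `I = Ker ε`. -/
theorem biderivation_iff_annihilates
    {K B : Type*} [CommRing K] [Ring B] [Algebra K B]
    (ε : B →ₐ[K] K) (β : B →ₗ[K] B →ₗ[K] K) :
    ((∀ b c d : B, β (b * c) d = ε b * β c d + ε c * β b d) ∧
      (∀ b c d : B, β b (c * d) = ε c * β b d + ε d * β b c)) ↔
    (∀ x ∈ (Submodule.span K {(1 : B)} ⊔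
        Submodule.restrictScalars K ((RingHom.ker ε.toRingHom) ^ 2)),
      (∀ c : B, β x c = 0) ∧ (∀ c : B, β c x = 0)) := by
  constructor
  · rintro ⟨hl, hr⟩ x hx
    have h1l : ∀ c : B, β 1 c = 0 := by
      intro c
      have := hl 1 1 c
      simp only [one_mul, map_one] at this
      exact add_eq_left.mp this.symm
    have h1r : ∀ c : B, β c 1 = 0 := by
      intro c
      have := hr c 1 1
      simp only [one_mul, map_one] at this
      exact add_eq_left.mp this.symm
    have hzkey : ∀ z ∈ RingHom.ker ε.toRingHom * RingHom.ker ε.toRingHom,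
        (∀ c : B, β z c = 0) ∧ (∀ c : B, β c z = 0) := by
      intro z hz
      refine Submodule.mul_induction_on hz ?_ ?_
      · intro m hm n hn
        have hm' : ε m = 0 := hm
        have hn' : ε n = 0 := hn
        constructor <;> intro c
        · rw [hl m n c, hm', hn']; ring
        · rw [hr c m n, hm', hn']; ring
      · intro u v hu hv
        constructor <;> intro c
        · rw [map_add, LinearMap.add_apply, hu.1 c, hv.1 c, add_zero]
        · rw [map_add, hu.2 c, hv.2 c, add_zero]
    rcases Submodule.mem_sup.mp hx with ⟨y, hy, z, hz, rfl⟩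
    rcases Submodule.mem_span_singleton.mp hy with ⟨k, rfl⟩
    have hz' : z ∈ (RingHom.ker ε.toRingHom) * (RingHom.ker ε.toRingHom) := by
      have : z ∈ (RingHom.ker ε.toRingHom) ^ 2 := hz
      rwa [Submodule.pow_succ, Submodule.pow_one] at this
    obtain ⟨hzl, hzr⟩ := hzkey z hz'
    constructor
    · intro c
      simp [h1l c, hzl c]
    · intro c
      simp [h1r c, hzr c]
  · intro h
    have h1 : (1 : B) ∈ (Submodule.span K {(1 : B)} ⊔
        Submodule.restrictScalars K ((RingHom.ker ε.toRingHom) ^ 2)) :=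
      Submodule.mem_sup_left (Submodule.mem_span_singleton_self 1)
    have h1l := (h 1 h1).1
    have h1r := (h 1 h1).2
    have key : ∀ b c : B, (b - ε b • 1) * (c - ε c • 1) ∈
        (Submodule.span K {(1 : B)} ⊔
          Submodule.restrictScalars K ((RingHom.ker ε.toRingHom) ^ 2)) := by
      intro b c
      apply Submodule.mem_sup_right
      show (b - ε b • 1) * (c - ε c • 1) ∈ (RingHom.ker ε.toRingHom) ^ 2
      rw [Submodule.pow_succ, Submodule.pow_one]
      apply Ideal.mul_mem_mul
      · show ε _ = 0
        simp
      · show ε _ = 0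
        simp
    have expand : ∀ b c : B, b * c = (b - ε b • 1) * (c - ε c • 1)
        + ε b • c + ε c • b - (ε b * ε c) • (1 : B) := by
      intro b c
      simp only [sub_mul, mul_sub, smul_mul_assoc, mul_smul_comm, one_mul,
        mul_one, smul_sub, smul_smul, mul_comm (ε c) (ε b)]
      abel
    constructor
    · intro b c d
      rw [expand b c]
      simp only [map_sub, map_add, map_smul, LinearMap.sub_apply,
        LinearMap.add_apply, LinearMap.smul_apply, (h _ (key b c)).1 d,
        h1l d, smul_zero, smul_eq_mul, zero_add, sub_zero, mul_zero]
    · intro b c d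
      rw [expand c d]
      simp only [map_sub, map_add, map_smul, LinearMap.smul_apply,
        (h _ (key c d)).2 b, h1r b, smul_zero, smul_eq_mul, zero_add,
        sub_zero, mul_zero]
end

section
/- If B is a cocommutative Hopf algebra, then every symmetric bilinear form • : B × B → K is balanced, i.e. satisfies (b • c'')·s(c')c''' = (c • b'')·s(b''')b' for all b, c ∈ B. -/
open scoped TensorProduct

/-- The iterated comultiplication `b ↦ b' ⊗ b'' ⊗ b'''`. -/
noncomputable def comulIter3 (K : Type*) {B : Type*} [CommRing K] [AddCommGroup B]
    [Module K B] [Coalgebra K B] (b : B) : (B ⊗[K] B) ⊗[K] B :=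
  LinearMap.rTensor B (Coalgebra.comul (R := K)) (Coalgebra.comul b)

/-- `∑ i ∈ s, f i ⊗ g i ⊗ h i` is a representation of the iterated
comultiplication `b' ⊗ b'' ⊗ b'''` of `b`. -/
def IsRepr3 (K : Type*) {B : Type*} [CommRing K] [AddCommGroup B]
    [Module K B] [Coalgebra K B] (b : B) (s : Finset ℕ) (f g h : ℕ → B) : Prop :=
  ∑ i ∈ s, (f i ⊗ₜ[K] g i) ⊗ₜ[K] h i = comulIter3 K b

/-- A bilinear form `β` on a Hopf algebra `B` is balanced if
`(b • c'')·s(c')c''' = (c • b'')·s(b''')b'` for all `b, c ∈ B`. -/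
def IsBalancedForm (K : Type*) {B : Type*} [CommRing K] [Ring B] [HopfAlgebra K B]
    (β : B →ₗ[K] B →ₗ[K] K) : Prop :=
  ∀ (b c : B) (sb sc : Finset ℕ) (b1 b2 b3 c1 c2 c3 : ℕ → B),
    IsRepr3 K b sb b1 b2 b3 → IsRepr3 K c sc c1 c2 c3 →
    ∑ j ∈ sc, β b (c2 j) • (HopfAlgebra.antipode (R := K) (c1 j) * c3 j) =
      ∑ i ∈ sb, β c (b2 i) • (HopfAlgebra.antipode (R := K) (b3 i) * b1 i)

section Aux

variable {K B : Type*} [CommRing K] [Ring B] [HopfAlgebra K B]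

/-- `w ⊗ z ↦ γ z • w`. -/
noncomputable def auxFm (γ : B →ₗ[K] K) : B ⊗[K] B →ₗ[K] B :=
  TensorProduct.lift (((LinearMap.lsmul K B).comp γ).flip)

@[simp] lemma auxFm_tmul (γ : B →ₗ[K] K) (w z : B) : auxFm γ (w ⊗ₜ[K] z) = γ z • w := rfl

/-- swap the second and third tensor factors. -/
noncomputable def auxSw : (B ⊗[K] B) ⊗[K] B →ₗ[K] (B ⊗[K] B) ⊗[K] B :=
  (TensorProduct.assoc K B B B).symm.toLinearMap ∘ₗ
    ((TensorProduct.comm K B B).toLinearMap.lTensor B) ∘ₗ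
    (TensorProduct.assoc K B B B).toLinearMap

@[simp] lemma auxSw_tmul (x y z : B) :
    (auxSw : (B ⊗[K] B) ⊗[K] B →ₗ[K] (B ⊗[K] B) ⊗[K] B) ((x ⊗ₜ[K] y) ⊗ₜ[K] z)
      = (x ⊗ₜ[K] z) ⊗ₜ[K] y := rfl

lemma auxSw_comulIter3
    (hcocomm : ∀ a : B,
      TensorProduct.comm K B B (Coalgebra.comul a) = Coalgebra.comul (R := K) a)
    (c : B) : auxSw (comulIter3 K c) = comulIter3 K c := by
  have hcomm : (TensorProduct.comm K B B).toLinearMap ∘ₗ Coalgebra.comul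
      = (Coalgebra.comul (R := K) (A := B)) := LinearMap.ext hcocomm
  have h1 : ((TensorProduct.comm K B B).toLinearMap.lTensor B)
        ((Coalgebra.comul (R := K)).lTensor B (Coalgebra.comul c))
      = (Coalgebra.comul (R := K)).lTensor B (Coalgebra.comul c) := by
    rw [← LinearMap.lTensor_comp_apply, hcomm]
  calc auxSw (comulIter3 K c)
      = (TensorProduct.assoc K B B B).symm
          (((TensorProduct.comm K B B).toLinearMap.lTensor B)
            ((TensorProduct.assoc K B B B)
              ((Coalgebra.comul (R := K)).rTensor B (Coalgebra.comul c)))) := rfl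
    _ = (TensorProduct.assoc K B B B).symm
          ((Coalgebra.comul (R := K)).lTensor B (Coalgebra.comul c)) := by
          rw [Coalgebra.coassoc_apply, h1]
    _ = comulIter3 K c := Coalgebra.coassoc_symm_apply c

lemma aux_key (γ : B →ₗ[K] K) (m : B ⊗[K] B →ₗ[K] B)
    (hm : m ∘ₗ Coalgebra.comul = Algebra.linearMap K B ∘ₗ Coalgebra.counit) (c : B) :
    auxFm γ (m.rTensor B (comulIter3 K c)) = γ c • 1 := by
  have : m.rTensor B (comulIter3 K c)
      = (Algebra.linearMap K B ∘ₗ Coalgebra.counit).rTensor B (Coalgebra.comul c) := by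
    rw [comulIter3, ← LinearMap.rTensor_comp_apply, hm]
  rw [this, LinearMap.rTensor_comp, LinearMap.comp_apply,
    Coalgebra.rTensor_counit_comul]
  simp

end Aux

/-- If `B` is a cocommutative Hopf algebra, then every
symmetric bilinear form `β : B × B → K` is balanced. -/
theorem symmetric_form_balanced_of_cocomm
    {K B : Type*} [CommRing K] [Ring B] [HopfAlgebra K B]
    (hcocomm : ∀ a : B,
      TensorProduct.comm K B B (Coalgebra.comul a) = Coalgebra.comul (R := K) a)
    (β : B →ₗ[K] B →ₗ[K] K) (hsymm : ∀ b c : B, β b c = β c b) :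
    IsBalancedForm K β := by
  have hcomm : (TensorProduct.comm K B B).toLinearMap ∘ₗ Coalgebra.comul
      = (Coalgebra.comul (R := K) (A := B)) := LinearMap.ext hcocomm
  set s : B →ₗ[K] B := HopfAlgebra.antipode (R := K) with hs
  set ms : B ⊗[K] B →ₗ[K] B := LinearMap.mul' K B ∘ₗ s.rTensor B with hms_def
  set ms' : B ⊗[K] B →ₗ[K] B := ms ∘ₗ (TensorProduct.comm K B B).toLinearMap with hms'_def
  have hms : ms ∘ₗ Coalgebra.comul = Algebra.linearMap K B ∘ₗ Coalgebra.counit := by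
    rw [hms_def, LinearMap.comp_assoc]
    exact HopfAlgebra.mul_antipode_rTensor_comul
  have hms' : ms' ∘ₗ Coalgebra.comul = Algebra.linearMap K B ∘ₗ Coalgebra.counit := by
    rw [hms'_def, LinearMap.comp_assoc, hcomm]
    exact hms
  intro b c sb sc b1 b2 b3 c1 c2 c3 hb hc
  unfold IsRepr3 at hb hc
  have hL : ∑ j ∈ sc, β b (c2 j) • (HopfAlgebra.antipode (R := K) (c1 j) * c3 j)
      = auxFm (β b) (ms.rTensor B (auxSw (comulIter3 K c))) := by
    rw [← hc]
    simp [hms_def, map_sum, hs]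
  have hR : ∑ i ∈ sb, β c (b2 i) • (HopfAlgebra.antipode (R := K) (b3 i) * b1 i)
      = auxFm (β c) (ms'.rTensor B (auxSw (comulIter3 K b))) := by
    rw [← hb]
    simp [hms'_def, hms_def, map_sum, hs]
  rw [hL, hR, auxSw_comulIter3 hcocomm, auxSw_comulIter3 hcocomm,
    aux_key (β b) ms hms c, aux_key (β c) ms' hms' b, hsymm b c]
end
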